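/- arXiv:2304.08363 — 3 statements merged into one kernel-verified Lean document; each statement's English description precedes it below -/
import Mathlib

section
/- With the block data of the standard-form graph code (adjacency matrix G = [[G_1,N],[N^T,G_2]], Γ = [I_k M]), the logical operator rows Z̄ = [0 I_k | N^T G_2] and X̄ = [0 0 | I_k M] satisfy: each Z̄_i and each X̄_j commutes with every stabilizer row of C_G = [M^T I_{n-k} | M^T G_1 + N^T M^T N + G_2], the Z̄_i pairwise commute, the X̄_j pairwise commute, and X̄_i anticommutes with Z̄_j if and only if i = j. -/
open Finset

variable {k m : ℕ}

/-- X-part of the `i`-th stabilizer row of `C_G = [Mᵀ I_{n-k} | …]`, with the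
`n = k + (n-k)` qubits indexed by `Fin k ⊕ Fin m` (here `m = n - k`). -/
def stabX (M : Matrix (Fin k) (Fin m) (ZMod 2)) (i : Fin m) :
    Fin k ⊕ Fin m → ZMod 2 :=
  Sum.elim (fun a => M a i) (fun b => if b = i then 1 else 0)

/-- Z-part of the `i`-th stabilizer row of `C_G = [… | MᵀG₁+Nᵀ  MᵀN+G₂]`. -/
def stabZ (G1 : Matrix (Fin k) (Fin k) (ZMod 2))
    (G2 : Matrix (Fin m) (Fin m) (ZMod 2))
    (N M : Matrix (Fin k) (Fin m) (ZMod 2)) (i : Fin m) :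
    Fin k ⊕ Fin m → ZMod 2 :=
  Sum.elim (fun a => (∑ a', M a' i * G1 a' a) + N a i)
    (fun b => (∑ a', M a' i * N a' b) + G2 i b)

/-- X-part of the logical `Z̄_i` row: the Pauli `X` sits on the `i`-th pivot
qubit (so that `Z̄_i = g_i = X_i Z^{G_i}` is the graph-state generator). -/
def zbarX (i : Fin k) : Fin k ⊕ Fin m → ZMod 2 :=
  Sum.elim (fun a => if a = i then 1 else 0) (fun _ => 0)

/-- Z-part of the logical `Z̄_i` row: row `i` of the adjacency blocks `[G₁ N]`. -/
def zbarZ (G1 : Matrix (Fin k) (Fin k) (ZMod 2))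
    (N : Matrix (Fin k) (Fin m) (ZMod 2)) (i : Fin k) :
    Fin k ⊕ Fin m → ZMod 2 :=
  Sum.elim (fun a => G1 i a) (fun b => N i b)

/-- X-part of the logical `X̄_i` row (`X̄` is `Z`-type: `X̄ = [0 0 | I_k M]`). -/
def xbarX (i : Fin k) : Fin k ⊕ Fin m → ZMod 2 := fun _ => 0

/-- Z-part of the logical `X̄_i` row: row `i` of `[I_k  M]`. -/
def xbarZ (M : Matrix (Fin k) (Fin m) (ZMod 2)) (i : Fin k) :
    Fin k ⊕ Fin m → ZMod 2 :=
  Sum.elim (fun a => if a = i then 1 else 0) (fun b => M i b)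

/-- The symplectic inner product of Pauli rows `[x|z]` and `[x'|z']`. -/
def sympl (x z x' z' : Fin k ⊕ Fin m → ZMod 2) : ZMod 2 :=
  ∑ c, (x c * z' c + x' c * z c)

/-- With the block data of the standard-form graph code, each logical row `Z̄_i`
and `X̄_j` commutes with every stabilizer row of `C_G`, the `Z̄_i` pairwise
commute, the `X̄_j` pairwise commute, and `X̄_i` anticommutes with `Z̄_j`
if and only if `i = j`. -/
theorem logical_rows_relations (G1 : Matrix (Fin k) (Fin k) (ZMod 2))
    (G2 : Matrix (Fin m) (Fin m) (ZMod 2))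
    (N M : Matrix (Fin k) (Fin m) (ZMod 2))
    (hG1 : G1.IsSymm) (hG1d : ∀ a, G1 a a = 0)
    (hG2 : G2.IsSymm) (hG2d : ∀ b, G2 b b = 0) :
    (∀ (i : Fin k) (j : Fin m),
        sympl (zbarX i) (zbarZ G1 N i) (stabX M j) (stabZ G1 G2 N M j) = 0) ∧
    (∀ (i : Fin k) (j : Fin m),
        sympl (xbarX i) (xbarZ M i) (stabX M j) (stabZ G1 G2 N M j) = 0) ∧
    (∀ i j : Fin k, sympl (zbarX i) (zbarZ G1 N i) (zbarX j) (zbarZ G1 N j) = 0) ∧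
    (∀ i j : Fin k, sympl (xbarX i) (xbarZ M i) (xbarX j) (xbarZ M j) = 0) ∧
    (∀ i j : Fin k,
        sympl (xbarX i) (xbarZ M i) (zbarX j) (zbarZ G1 N j) =
          if i = j then 1 else 0) := by
  have hsym : ∀ a a', G1 a a' = G1 a' a := fun a a' => hG1.apply a' a
  refine ⟨?_, ?_, ?_, ?_, ?_⟩
  · intro i j
    simp only [sympl, zbarX, zbarZ, stabX, stabZ, Fintype.sum_sum_type, Sum.elim_inl,
      Sum.elim_inr, ite_mul, one_mul, zero_mul, mul_ite, mul_one, mul_zero]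
    rw [Finset.sum_add_distrib, Finset.sum_add_distrib, Finset.sum_ite_eq' Finset.univ i,
      Finset.sum_ite_eq' Finset.univ j]
    simp only [Finset.mem_univ, if_true, Finset.sum_const_zero, add_zero, zero_add]
    have : ∀ a : Fin k, M a j * G1 i a = M a j * G1 a i := fun a => by rw [hsym]
    rw [Finset.sum_congr rfl fun a _ => this a]
    ring_nf
    have h2 : (2 : ZMod 2) = 0 := rfl
    simp [h2]
  · intro i j
    simp only [sympl, xbarX, xbarZ, stabX, Fintype.sum_sum_type, Sum.elim_inl,
      Sum.elim_inr, ite_mul, one_mul, zero_mul, mul_ite, mul_one, mul_zero, zero_add]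
    simp [Finset.sum_ite_eq', CharTwo.add_self_eq_zero]
  · intro i j
    simp only [sympl, zbarX, zbarZ, Fintype.sum_sum_type, Sum.elim_inl, Sum.elim_inr,
      ite_mul, one_mul, zero_mul, mul_ite, mul_one, mul_zero, zero_add, add_zero]
    rw [Finset.sum_add_distrib, Finset.sum_ite_eq' Finset.univ i, Finset.sum_ite_eq' Finset.univ j]
    simp [hsym i j, CharTwo.add_self_eq_zero]
  · intro i j
    simp [sympl, xbarX]
  · intro i j
    simp only [sympl, xbarX, xbarZ, zbarX, zbarZ, Fintype.sum_sum_type, Sum.elim_inl,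
      Sum.elim_inr, zero_mul, zero_add, ite_mul, one_mul, mul_zero, add_zero]
    rw [Finset.sum_ite_eq' Finset.univ j]
    simp only [Finset.sum_const_zero, add_zero, Finset.mem_univ, if_true]
    by_cases h : i = j <;> simp [h, eq_comm]
end

section
/- Pivoting a graph G on an edge (i,i') where i and i' have no common neighbors and the sets N(i)\{i'} and N(i')\{i} span no edges between them, followed by deleting i and i', yields the graph obtained from G − {i,i'} by adding all edges between N(i)\{i'} and N(i')\{i} (a generalized local complementation between these sets). -/
open Finset

/-- Local complementation of a simple graph `G` at a vertex `v`. -/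
def localComp {V : Type} (G : SimpleGraph V) (v : V) : SimpleGraph V where
  Adj u w := u ≠ w ∧
    ((G.Adj u w ∧ ¬(G.Adj u v ∧ G.Adj w v)) ∨ (¬G.Adj u w ∧ (G.Adj u v ∧ G.Adj w v)))
  symm := by
    refine ⟨?_⟩
    intro u w h
    refine ⟨h.1.symm, ?_⟩
    have h2 := h.2
    rw [G.adj_comm w u]
    tauto
  loopless := ⟨fun u h => h.1 rfl⟩

/-- Pivoting on the edge `(i,i')`: the composition of local complementations
`τ_i ∘ τ_{i'} ∘ τ_i`. -/
def pivot {V : Type} (G : SimpleGraph V) (i i' : V) : SimpleGraph V :=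
  localComp (localComp (localComp G i) i') i

/-!
With `a x := G.Adj x i` and `b x := G.Adj x i'`, the three local complementations of a pivot
toggle the pair `uw` by `a u ∧ a w`, then by `(a u ⊕ b u) ∧ (a w ⊕ b w)`, then by `b u ∧ b w`
(after the first two, the neighbours of `i` outside `{i, i'}` are the former neighbours of `i'`).
The terms `a u ∧ a w` and `b u ∧ b w` cancel, so a pivot toggles `uw` exactly by
`(a u ∧ b w) ⊕ (b u ∧ a w)`. When `i` and `i'` have no common neighbour these two terms never hold
together, and when no edge joins their exclusive neighbourhoods each of them forces `uw` to be a
non-edge, so the toggles only add the edges between the two neighbourhoods.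
-/

section LocalComp

variable {V : Type} (G : SimpleGraph V) {u w v : V}

theorem localComp_adj_of_ne (h : u ≠ w) :
    (localComp G v).Adj u w ↔ Xor (G.Adj u w) (G.Adj u v ∧ G.Adj w v) := by
  simp only [localComp, ne_eq, h, not_false_eq_true, true_and]
  grind

theorem localComp_adj_center : (localComp G v).Adj u v ↔ G.Adj u v := by
  simp only [localComp, G.loopless.irrefl v, and_false, not_false_eq_true, and_true,
    or_false]
  exact ⟨And.right, fun h => ⟨h.ne, h⟩⟩

end LocalComp

section Pivot

variable {V : Type} {G : SimpleGraph V} {i i' u w : V}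

theorem localComp_adj_neighbor_of_adj (hadj : G.Adj i i') (hu' : u ≠ i') :
    (localComp G i).Adj u i' ↔ Xor (G.Adj u i') (G.Adj u i) := by
  simp only [localComp_adj_of_ne G hu', hadj.symm, and_true]

theorem localComp_localComp_adj_center (hadj : G.Adj i i') (hu : u ≠ i) (hu' : u ≠ i') :
    (localComp (localComp G i) i').Adj u i ↔ G.Adj u i' := by
  have hii' : (localComp G i).Adj i i' := ((localComp_adj_center G).mpr hadj.symm).symm
  rw [localComp_adj_of_ne _ hu, localComp_adj_center, localComp_adj_neighbor_of_adj hadj hu',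
    iff_true_intro hii', and_true]
  grind

theorem pivot_adj_of_ne (hadj : G.Adj i i') (hu : u ≠ i) (hu' : u ≠ i') (hw : w ≠ i)
    (hw' : w ≠ i') (huw : u ≠ w) :
    (pivot G i i').Adj u w ↔
      Xor (G.Adj u w) (Xor (G.Adj u i ∧ G.Adj w i') (G.Adj u i' ∧ G.Adj w i)) := by
  rw [pivot, localComp_adj_of_ne _ huw, localComp_localComp_adj_center hadj hu hu',
    localComp_localComp_adj_center hadj hw hw', localComp_adj_of_ne _ huw,
    localComp_adj_neighbor_of_adj hadj hu', localComp_adj_neighbor_of_adj hadj hw', localComp_adj_of_ne _ huw]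
  grind

end Pivot

/-- Pivoting `G` on an edge `(i,i')` where `i` and `i'` have no common
neighbours and no edges run between `N(i)\{i'}` and `N(i')\{i}`, followed by
deleting `i` and `i'`, yields the graph obtained from `G − {i,i'}` by adding
all edges between `N(i)\{i'}` and `N(i')\{i}` — a generalized local
complementation between these sets. -/
theorem pivot_glc {V : Type} (G : SimpleGraph V) (i i' : V)
    (hadj : G.Adj i i')
    (hcommon : ∀ u, ¬(G.Adj u i ∧ G.Adj u i'))
    (hnoedge : ∀ u w, G.Adj u i → u ≠ i' → G.Adj w i' → w ≠ i → ¬G.Adj u w) :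
    ∀ u w, u ≠ i → u ≠ i' → w ≠ i → w ≠ i' →
      ((pivot G i i').Adj u w ↔
        (G.Adj u w ∨ (G.Adj u i ∧ G.Adj w i') ∨ (G.Adj w i ∧ G.Adj u i'))) := by
  intro u w hu hu' hw hw'
  rcases eq_or_ne u w with rfl | huw
  · simp only [(pivot G i i').loopless.irrefl, G.loopless.irrefl, false_or, false_iff, or_self]
    exact fun h => hcommon u ⟨h.1, h.2⟩
  · have hno_uw := hnoedge u w
    have hno_wu := hnoedge w u
    rw [G.adj_comm w u] at hno_wu
    have hcommon_u := hcommon u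
    rw [pivot_adj_of_ne hadj hu hu' hw hw' huw]
    grind
end

section
/- If |ψ⟩ is an m-qubit stabilizer state and the projection P^+ = |Φ^+⟩⟨Φ^+| ⊗ I^{⊗(m-2)} onto the Bell state of the first two qubits does not annihilate |ψ⟩, then the resulting (m-2)-qubit state |ψ*⟩ defined by P^+|ψ⟩ = |Φ^+⟩ ⊗ |ψ*⟩ is again a stabilizer state. -/
open Finset

/-- The Pauli operator `c · X^x Z^z` acting on a state of qubits indexed by `q`:
`X^x Z^z |t⟩ = (-1)^{z·t} |t+x⟩`. -/
noncomputable def pauliAct {q : Type} [Fintype q] (c : ℂ) (x z : q → ZMod 2)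
    (ψ : (q → ZMod 2) → ℂ) : (q → ZMod 2) → ℂ :=
  fun s => c * (-1 : ℂ) ^ ((∑ j, z j * (s j + x j)).val) * ψ (s + x)

/-- `ψ` is a stabilizer state: it is nonzero and is stabilized by
`card q` Pauli operators whose symplectic vectors are linearly independent
(so it is the unique joint `+1`-eigenstate of an abelian Pauli subgroup with
`card q` independent generators not containing `−I`). -/
def IsStabilizerState {q : Type} [Fintype q] [DecidableEq q]
    (ψ : (q → ZMod 2) → ℂ) : Prop :=
  ψ ≠ 0 ∧ ∃ (c : Fin (Fintype.card q) → ℂ)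
    (x z : Fin (Fintype.card q) → q → ZMod 2),
      LinearIndependent (ZMod 2) (fun i => Sum.elim (x i) (z i)) ∧
        ∀ i, pauliAct (c i) (x i) (z i) ψ = ψ

/-- Insert the value `kk` in the first two positions: `(kk, kk, t)`. -/
def emb {r : ℕ} (kk : ZMod 2) (t : Fin r → ZMod 2) : Fin (r + 2) → ZMod 2 :=
  Fin.cons kk (Fin.cons kk t)

/-- The projector `P⁺ = |Φ⁺⟩⟨Φ⁺| ⊗ I^{⊗(m-2)}` onto the (unnormalized) Bell
state `|Φ⁺⟩ = |00⟩+|11⟩` of the first two qubits. -/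
noncomputable def bellProj {r : ℕ} (ψ : (Fin (r + 2) → ZMod 2) → ℂ) :
    (Fin (r + 2) → ZMod 2) → ℂ :=
  fun s => (if s 0 = s 1 then (1 : ℂ) else 0) *
    ∑ kk : ZMod 2, ψ (emb kk (fun j => s j.succ.succ))

/-!
The symplectic vectors of the Pauli operators fixing a nonzero state `ψ` form an isotropic
subspace `S` of `𝔽₂^{2m}` (operators with a common fixed vector commute), of dimension at least
`m` when `ψ` is a stabilizer state. An element of `S` orthogonal to `A = ⟨X₁X₂, Z₁Z₂⟩` acts on the
Bell pair as `X^a Z^b ⊗ X^a Z^b`; such an operator passes through the contraction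
`ψ* t = Σ_k ψ(k,k,t)`, so its restriction to the remaining `m - 2` qubits fixes `ψ*`. Because `S`
is isotropic, `S ∩ A^⊥` has codimension at most `dim A - dim (S ∩ A)` in `S`, and the restriction
kills only `S ∩ A`; hence the restrictions span a subspace of dimension at least
`m - dim A ≥ m - 2`.
-/

open Matrix Module

lemma Submodule.finrank_map_add_finrank_inf_ker {K V V' : Type*} [DivisionRing K]
    [AddCommGroup V] [Module K V] [FiniteDimensional K V] [AddCommGroup V'] [Module K V']
    (p : Submodule K V) (f : V →ₗ[K] V') :
    finrank K (p.map f) + finrank K (p ⊓ LinearMap.ker f : Submodule K V) = finrank K p := by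
  have h := LinearMap.finrank_range_add_finrank_ker (f ∘ₗ p.subtype)
  rwa [LinearMap.range_comp, Submodule.range_subtype, LinearMap.ker_comp,
    ← Submodule.finrank_map_subtype_eq, Submodule.map_comap_subtype] at h

lemma LinearMap.BilinForm.mem_orthogonal_span_iff {K V : Type*} [CommRing K] [AddCommGroup V]
    [Module K V] (ω : LinearMap.BilinForm K V) (S : Set V) (v : V) :
    v ∈ ω.orthogonal (Submodule.span K S) ↔ ∀ s ∈ S, ω s v = 0 :=
  Submodule.span_le (p := LinearMap.ker (ω.flip v))

/-- Isotropy of `W` puts the image of `W` under `v ↦ ω(·, v)|_A` inside the annihilator of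
`W ∩ A`. -/
theorem LinearMap.BilinForm.finrank_le_finrank_map_inf_orthogonal_add {K V V' : Type*} [Field K]
    [AddCommGroup V] [Module K V] [FiniteDimensional K V] [AddCommGroup V'] [Module K V']
    (ω : LinearMap.BilinForm K V) {W A : Submodule K V} (hW : W ≤ ω.orthogonal W)
    (π : V →ₗ[K] V') (hπ : ω.orthogonal A ⊓ LinearMap.ker π ≤ A) :
    finrank K W ≤ finrank K ((W ⊓ ω.orthogonal A).map π) + finrank K A := by
  let Φ : V →ₗ[K] Module.Dual K A := (ω ∘ₗ A.subtype).flip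
  have hker : LinearMap.ker Φ = ω.orthogonal A := by
    ext v
    simp [Φ, LinearMap.ext_iff]
  have hΦ : W.map Φ ≤ (W.comap A.subtype).dualAnnihilator := by
    rintro _ ⟨w, hw, rfl⟩
    exact (Submodule.mem_dualAnnihilator _).mpr fun a ha => hW hw a ha
  have hWA : finrank K (W.comap A.subtype) = finrank K (A ⊓ W : Submodule K V) := by
    rw [← Submodule.finrank_map_subtype_eq, Submodule.map_comap_subtype]
  have hker_π : finrank K ((W ⊓ ω.orthogonal A) ⊓ LinearMap.ker π : Submodule K V)
      ≤ finrank K (A ⊓ W : Submodule K V) :=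
    Submodule.finrank_mono fun v ⟨⟨hvW, hvA⟩, hvπ⟩ => ⟨hπ ⟨hvA, hvπ⟩, hvW⟩
  have hann := Subspace.finrank_add_finrank_dualAnnihilator_eq (W.comap A.subtype)
  have hrank_Φ := W.finrank_map_add_finrank_inf_ker Φ
  have hrank_π := (W ⊓ ω.orthogonal A).finrank_map_add_finrank_inf_ker π
  rw [hker] at hrank_Φ
  have := Submodule.finrank_mono hΦ
  omega

lemma neg_one_pow_val_add (a b : ZMod 2) :
    (-1 : ℂ) ^ (a + b).val = (-1) ^ a.val * (-1) ^ b.val := by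
  rw [ZMod.val_add, ← pow_add, ← neg_one_pow_eq_pow_mod_two]

lemma neg_one_pow_val_injective : Function.Injective fun a : ZMod 2 => (-1 : ℂ) ^ a.val := by
  intro a b h
  fin_cases a <;> fin_cases b <;> first | rfl | norm_num [ZMod.val] at h

section Pauli

variable {q : Type} [Fintype q]

lemma pauliAct_apply (c : ℂ) (x z : q → ZMod 2) (ψ : (q → ZMod 2) → ℂ) (s : q → ZMod 2) :
    pauliAct c x z ψ s = c * (-1) ^ (z ⬝ᵥ (s + x)).val * ψ (s + x) := rfl

lemma pauliAct_eq_smul (c : ℂ) (x z : q → ZMod 2) (ψ : (q → ZMod 2) → ℂ) :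
    pauliAct c x z ψ = c • pauliAct 1 x z ψ := by
  funext s
  simp [pauliAct, mul_assoc]

lemma pauliAct_one_zero_zero (ψ : (q → ZMod 2) → ℂ) : pauliAct 1 0 0 ψ = ψ := by
  funext s
  simp [pauliAct]

lemma pauliAct_pauliAct (c c' : ℂ) (x z x' z' : q → ZMod 2) (ψ : (q → ZMod 2) → ℂ) :
    pauliAct c x z (pauliAct c' x' z' ψ)
      = pauliAct (c * c' * (-1) ^ (z ⬝ᵥ x').val) (x + x') (z + z') ψ := by
  funext s
  have hsign : z ⬝ᵥ (s + x) + z' ⬝ᵥ (s + x + x') = z ⬝ᵥ x' + (z + z') ⬝ᵥ (s + x + x') := by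
    have h2 : (2 : ZMod 2) = 0 := rfl
    simp only [dotProduct_add, add_dotProduct]
    linear_combination (-(z ⬝ᵥ x')) * h2
  have := congrArg (fun a : ZMod 2 => (-1 : ℂ) ^ a.val) hsign
  simp only [neg_one_pow_val_add] at this
  simp only [pauliAct_apply, ← add_assoc]
  linear_combination (c * c' * ψ (s + x + x')) * this

variable {ψ : (q → ZMod 2) → ℂ}

lemma pauliAct_phase_unique (hψ : ψ ≠ 0) {c c' : ℂ} {x z : q → ZMod 2}
    (h : pauliAct c x z ψ = ψ) (h' : pauliAct c' x z ψ = ψ) : c = c' := by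
  rw [pauliAct_eq_smul] at h h'
  have hne : pauliAct 1 x z ψ ≠ 0 := by
    rintro h0
    rw [h0, smul_zero] at h
    exact hψ h.symm
  exact smul_left_injective ℂ hne (h.trans h'.symm)

lemma phase_ne_zero_of_pauliAct_eq (hψ : ψ ≠ 0) {c : ℂ} {x z : q → ZMod 2}
    (h : pauliAct c x z ψ = ψ) : c ≠ 0 := by
  rintro rfl
  rw [pauliAct_eq_smul, zero_smul] at h
  exact hψ h.symm

/-- Pauli operators with a common nonzero fixed vector commute. -/
lemma dotProduct_eq_of_pauliAct_eq (hψ : ψ ≠ 0) {c c' : ℂ} {x z x' z' : q → ZMod 2}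
    (h : pauliAct c x z ψ = ψ) (h' : pauliAct c' x' z' ψ = ψ) : z ⬝ᵥ x' = z' ⬝ᵥ x := by
  have hxy : pauliAct (c * c' * (-1) ^ (z ⬝ᵥ x').val) (x + x') (z + z') ψ = ψ := by
    rw [← pauliAct_pauliAct, h', h]
  have hyx : pauliAct (c' * c * (-1) ^ (z' ⬝ᵥ x).val) (x + x') (z + z') ψ = ψ := by
    rw [add_comm x, add_comm z, ← pauliAct_pauliAct, h, h']
  have hcc' : c * c' ≠ 0 :=
    mul_ne_zero (phase_ne_zero_of_pauliAct_eq hψ h) (phase_ne_zero_of_pauliAct_eq hψ h')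
  rw [mul_comm c'] at hyx
  exact neg_one_pow_val_injective (mul_left_cancel₀ hcc' (pauliAct_phase_unique hψ hxy hyx))

variable (ψ) in
def pauliStabilizer : Submodule (ZMod 2) ((q → ZMod 2) × (q → ZMod 2)) where
  carrier := {v | ∃ c, pauliAct c v.1 v.2 ψ = ψ}
  zero_mem' := ⟨1, pauliAct_one_zero_zero ψ⟩
  add_mem' := by
    rintro v w ⟨c, hc⟩ ⟨c', hc'⟩
    exact ⟨_, by rw [Prod.fst_add, Prod.snd_add, ← pauliAct_pauliAct, hc', hc]⟩
  smul_mem' := by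
    intro a v hv
    obtain rfl | rfl : a = 0 ∨ a = 1 := (by decide : ∀ a : ZMod 2, a = 0 ∨ a = 1) a
    · exact ⟨1, by simpa using pauliAct_one_zero_zero ψ⟩
    · simpa using hv

variable (q) in
def symplecticForm : LinearMap.BilinForm (ZMod 2) ((q → ZMod 2) × (q → ZMod 2)) :=
  LinearMap.mk₂ (ZMod 2) (fun v w => v.2 ⬝ᵥ w.1 - w.2 ⬝ᵥ v.1)
    (fun _ _ _ => by simp only [Prod.fst_add, Prod.snd_add, add_dotProduct, dotProduct_add]; ring)
    (fun _ _ _ => by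
      simp only [Prod.smul_fst, Prod.smul_snd, smul_dotProduct, dotProduct_smul, smul_eq_mul]; ring)
    (fun _ _ _ => by simp only [Prod.fst_add, Prod.snd_add, add_dotProduct, dotProduct_add]; ring)
    (fun _ _ _ => by
      simp only [Prod.smul_fst, Prod.smul_snd, smul_dotProduct, dotProduct_smul, smul_eq_mul]; ring)

lemma symplecticForm_apply (v w : (q → ZMod 2) × (q → ZMod 2)) :
    symplecticForm q v w = v.2 ⬝ᵥ w.1 - w.2 ⬝ᵥ v.1 := rfl

lemma pauliStabilizer_le_orthogonal (hψ : ψ ≠ 0) :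
    pauliStabilizer ψ ≤ (symplecticForm q).orthogonal (pauliStabilizer ψ) := by
  rintro w ⟨c', hw⟩ v ⟨c, hv⟩
  rw [symplecticForm_apply, dotProduct_eq_of_pauliAct_eq hψ hv hw, sub_self]

lemma isStabilizerState_iff [DecidableEq q] :
    IsStabilizerState ψ ↔ ψ ≠ 0 ∧ Fintype.card q ≤ finrank (ZMod 2) (pauliStabilizer ψ) := by
  let e := LinearEquiv.sumArrowLequivProdArrow q q (ZMod 2) (ZMod 2)
  constructor
  · rintro ⟨hψ, c, x, z, hli, hstab⟩
    refine ⟨hψ, ?_⟩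
    have hli' : LinearIndependent (ZMod 2) fun i => (x i, z i) := hli.map' e.toLinearMap e.ker
    calc Fintype.card q
        = finrank (ZMod 2) (Submodule.span (ZMod 2) (Set.range fun i => (x i, z i))) := by
          rw [finrank_span_eq_card hli', Fintype.card_fin]
      _ ≤ _ := Submodule.finrank_mono <| Submodule.span_le.mpr <| by
          rintro _ ⟨i, rfl⟩
          exact ⟨c i, hstab i⟩
  · rintro ⟨hψ, hcard⟩
    obtain ⟨v, hv⟩ := exists_linearIndependent_of_le_finrank hcard
    choose c hc using fun i => (v i).2
    have hli := hv.map' (pauliStabilizer ψ).subtype (Submodule.ker_subtype _)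
    exact ⟨hψ, c, fun i => (v i).1.1, fun i => (v i).1.2,
      hli.map' e.symm.toLinearMap e.symm.ker, hc⟩

end Pauli

section Emb

variable {r : ℕ}

@[simp] lemma emb_apply_zero (a : ZMod 2) (t : Fin r → ZMod 2) : emb a t 0 = a := rfl

@[simp] lemma emb_apply_one (a : ZMod 2) (t : Fin r → ZMod 2) : emb a t 1 = a := by
  simp [emb]

@[simp] lemma emb_apply_succ_succ (a : ZMod 2) (t : Fin r → ZMod 2) (j : Fin r) :
    emb a t j.succ.succ = t j := rfl

lemma emb_add_emb (a b : ZMod 2) (x y : Fin r → ZMod 2) :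
    emb a x + emb b y = emb (a + b) (x + y) := by
  ext j
  exact Fin.cases rfl (Fin.cases rfl fun _ => rfl) j

lemma smul_emb (c a : ZMod 2) (x : Fin r → ZMod 2) : c • emb a x = emb (c * a) (c • x) := by
  ext j
  exact Fin.cases rfl (Fin.cases rfl fun _ => rfl) j

lemma emb_head_tail {f : Fin (r + 2) → ZMod 2} (h : f 0 = f 1) :
    emb (f 0) (fun j => f j.succ.succ) = f := by
  ext j
  refine Fin.cases rfl (Fin.cases ?_ fun _ => rfl) j
  simp [h]

lemma dotProduct_emb (f : Fin (r + 2) → ZMod 2) (a : ZMod 2) (t : Fin r → ZMod 2) :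
    f ⬝ᵥ emb a t = a * (f 0 + f 1) + (fun j => f j.succ.succ) ⬝ᵥ t := by
  simp only [dotProduct, Fin.sum_univ_succ, Fin.succ_zero_eq_one, emb_apply_zero,
    emb_apply_one, emb_apply_succ_succ]
  ring

lemma emb_dotProduct_emb (a b : ZMod 2) (x y : Fin r → ZMod 2) :
    emb a x ⬝ᵥ emb b y = x ⬝ᵥ y := by
  rw [dotProduct_emb, emb_apply_zero, emb_apply_one, CharTwo.add_self_eq_zero, mul_zero, zero_add]
  rfl

end Emb

section Bell

variable {r : ℕ}

def bellReduce (ψ : (Fin (r + 2) → ZMod 2) → ℂ) : (Fin r → ZMod 2) → ℂ :=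
  fun t => ∑ kk : ZMod 2, ψ (emb kk t)

lemma bellReduce_ne_zero {ψ : (Fin (r + 2) → ZMod 2) → ℂ} (h : bellProj ψ ≠ 0) :
    bellReduce ψ ≠ 0 := by
  contrapose! h
  funext s
  exact mul_eq_zero_of_right _ (congrFun h fun j => s j.succ.succ)

/-- A Pauli operator acting as the same factor `X^a Z^b` on both qubits of the Bell pair
passes through the contraction. -/
lemma pauliAct_bellReduce {ψ : (Fin (r + 2) → ZMod 2) → ℂ} {c : ℂ} {a b : ZMod 2}
    {x z : Fin r → ZMod 2} (h : pauliAct c (emb a x) (emb b z) ψ = ψ) :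
    pauliAct c x z (bellReduce ψ) = bellReduce ψ := by
  funext t
  calc pauliAct c x z (bellReduce ψ) t
      = ∑ kk : ZMod 2, c * (-1) ^ (z ⬝ᵥ (t + x)).val * ψ (emb (kk + a) (t + x)) := by
        rw [pauliAct_apply, bellReduce, Finset.mul_sum]
        exact (Fintype.sum_equiv (Equiv.addRight a) _ _ fun _ => rfl).symm
    _ = ∑ kk : ZMod 2, pauliAct c (emb a x) (emb b z) ψ (emb kk t) := by
        simp only [pauliAct_apply, emb_add_emb, emb_dotProduct_emb]
    _ = bellReduce ψ t := by rw [h]; rfl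

variable (r) in
/-- The symplectic vectors of `X ⊗ X` and `Z ⊗ Z` on the first two qubits, which
stabilize `|Φ⁺⟩`. -/
def bellPairPaulis : Submodule (ZMod 2) ((Fin (r + 2) → ZMod 2) × (Fin (r + 2) → ZMod 2)) :=
  Submodule.span (ZMod 2) {(emb 1 0, 0), (0, emb 1 0)}

variable (r) in
def dropBellPair :
    ((Fin (r + 2) → ZMod 2) × (Fin (r + 2) → ZMod 2)) →ₗ[ZMod 2]
      ((Fin r → ZMod 2) × (Fin r → ZMod 2)) :=
  (LinearMap.funLeft _ _ fun j => j.succ.succ).prodMap (LinearMap.funLeft _ _ fun j => j.succ.succ)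

lemma finrank_bellPairPaulis_le : finrank (ZMod 2) (bellPairPaulis r) ≤ 2 :=
  (finrank_span_le_card _).trans <| by
    rw [Set.toFinset_insert, Set.toFinset_singleton]
    exact Finset.card_le_two

lemma mem_orthogonal_bellPairPaulis_iff {v : (Fin (r + 2) → ZMod 2) × (Fin (r + 2) → ZMod 2)} :
    v ∈ (symplecticForm _).orthogonal (bellPairPaulis r) ↔ v.1 0 = v.1 1 ∧ v.2 0 = v.2 1 := by
  rw [bellPairPaulis, LinearMap.BilinForm.mem_orthogonal_span_iff]
  simp only [Set.mem_insert_iff, Set.mem_singleton_iff, forall_eq_or_imp, forall_eq,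
    symplecticForm_apply, dotProduct_comm (emb 1 0), dotProduct_emb, zero_dotProduct,
    dotProduct_zero, one_mul, add_zero, sub_zero, zero_sub, neg_eq_zero, CharTwo.add_eq_zero]
  exact and_comm

lemma orthogonal_bellPairPaulis_inf_ker_le :
    (symplecticForm _).orthogonal (bellPairPaulis r) ⊓ LinearMap.ker (dropBellPair r)
      ≤ bellPairPaulis r := by
  rintro v ⟨hv, hdrop⟩
  obtain ⟨hx, hz⟩ := mem_orthogonal_bellPairPaulis_iff.mp hv
  have hx_tail : (fun j : Fin r => v.1 j.succ.succ) = 0 := congrArg Prod.fst hdrop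
  have hz_tail : (fun j : Fin r => v.2 j.succ.succ) = 0 := congrArg Prod.snd hdrop
  refine Submodule.mem_span_pair.mpr ⟨v.1 0, v.2 0, Prod.ext ?_ ?_⟩
  · simp only [Prod.fst_add, Prod.smul_fst, smul_emb, mul_one, smul_zero, add_zero]
    rw [← hx_tail]
    exact emb_head_tail hx
  · simp only [Prod.snd_add, Prod.smul_snd, smul_emb, mul_one, smul_zero, zero_add]
    rw [← hz_tail]
    exact emb_head_tail hz

lemma map_dropBellPair_le (ψ : (Fin (r + 2) → ZMod 2) → ℂ) :
    (pauliStabilizer ψ ⊓ (symplecticForm _).orthogonal (bellPairPaulis r)).map (dropBellPair r)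
      ≤ pauliStabilizer (bellReduce ψ) := by
  rintro _ ⟨v, ⟨⟨c, hc⟩, hv⟩, rfl⟩
  replace hv := mem_orthogonal_bellPairPaulis_iff.mp hv
  rw [← emb_head_tail hv.1, ← emb_head_tail hv.2] at hc
  exact ⟨c, pauliAct_bellReduce hc⟩

end Bell

/-- If `ψ` is an `m`-qubit stabilizer state and the Bell projection on the first
two qubits does not annihilate it, then the `(m-2)`-qubit state `ψ*` (defined by
`P⁺ψ = Φ⁺ ⊗ ψ*`, i.e. `ψ* t = Σ_k ψ(k,k,t)`) is again a stabilizer state. -/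
theorem bellProj_stabilizer {r : ℕ} (ψ : (Fin (r + 2) → ZMod 2) → ℂ)
    (hψ : IsStabilizerState ψ) (h0 : bellProj ψ ≠ 0) :
    IsStabilizerState (fun t : Fin r → ZMod 2 => ∑ kk : ZMod 2, ψ (emb kk t)) := by
  change IsStabilizerState (bellReduce ψ)
  rw [isStabilizerState_iff, Fintype.card_fin] at hψ ⊢
  obtain ⟨hψ0, hrank⟩ := hψ
  refine ⟨bellReduce_ne_zero h0, Nat.le_of_add_le_add_right (b := 2) ?_⟩
  calc r + 2 ≤ finrank (ZMod 2) (pauliStabilizer ψ) := hrank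
    _ ≤ finrank (ZMod 2) ((pauliStabilizer ψ ⊓ (symplecticForm _).orthogonal (bellPairPaulis r)).map
          (dropBellPair r)) + finrank (ZMod 2) (bellPairPaulis r) :=
        (symplecticForm _).finrank_le_finrank_map_inf_orthogonal_add
          (pauliStabilizer_le_orthogonal hψ0) (dropBellPair r) orthogonal_bellPairPaulis_inf_ker_le
    _ ≤ finrank (ZMod 2) (pauliStabilizer (bellReduce ψ)) + 2 :=
        add_le_add (Submodule.finrank_mono (map_dropBellPair_le ψ)) finrank_bellPairPaulis_le
end
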